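/- Let ρ > 0, λ > 0, L > 0, c ≥ L²/ρ, and d ≥ 1. For positive definite A ∈ ℝ^{d×d} define Ψ*_A(x) = ½·xᵀA⁻¹x. Define U(x, S) = Ψ*_{ρS+λI}(x) − c·log(det(ρS+λI)/det(λI)) for x ∈ ℝ^d and S positive semidefinite. Then for any x, S, any z ∈ ℝ^d, and any mean-zero distribution p on [−L,L]: E_{α∼p}[U(x + αz, S + zzᵀ)] ≤ U(x, S). -/

import Mathlib

open MeasureTheory Matrix

/-- The Vovk–Azoury–Warmuth style Burkholder function
`U(x, S) = ½ xᵀ(ρS+λI)⁻¹x − c·log(det(ρS+λI)/det(λI))`. -/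
noncomputable def Uvaw (d : ℕ) (ρ lam c : ℝ) (x : Fin d → ℝ)
    (S : Matrix (Fin d) (Fin d) ℝ) : ℝ :=
  (1 / 2) * (x ⬝ᵥ ((ρ • S + lam • (1 : Matrix (Fin d) (Fin d) ℝ))⁻¹).mulVec x) -
    c * Real.log ((ρ • S + lam • (1 : Matrix (Fin d) (Fin d) ℝ)).det /
      (lam • (1 : Matrix (Fin d) (Fin d) ℝ)).det)

/-!
Write `B = ρS + λI` and `A = B + ρzzᵀ`. Since `α` has mean zero, the cross term of
`½ (x + αz)ᵀA⁻¹(x + αz)` integrates away and the expectation is at most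
`½ xᵀA⁻¹x + ½ L² zᵀA⁻¹z`. By Sherman–Morrison, `xᵀA⁻¹x ≤ xᵀB⁻¹x`, and with `t = ρ zᵀB⁻¹z`
one has `ρ zᵀA⁻¹z = t/(1+t) ≤ log(1+t) = log(det A/det B)` by the matrix determinant lemma.
Hence `c ≥ L²/ρ` lets the growth of the log-determinant pay for the quadratic term.
-/

namespace Matrix

section CommRing

variable {n R : Type*} [Fintype n]

theorem IsHermitian.dotProduct_mulVec_comm [CommSemiring R] [StarRing R] [TrivialStar R]
    {M : Matrix n n R} (hM : M.IsHermitian) (x y : n → R) :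
    x ⬝ᵥ M *ᵥ y = y ⬝ᵥ M *ᵥ x := by
  rw [dotProduct_mulVec, ← mulVec_transpose, ← conjTranspose_eq_transpose_of_trivial, hM.eq,
    dotProduct_comm]

theorem dotProduct_add_smul_mulVec_add_smul [CommRing R] (M : Matrix n n R) (x z : n → R)
    (a : R) :
    (x + a • z) ⬝ᵥ M *ᵥ (x + a • z) =
      x ⬝ᵥ M *ᵥ x + (x ⬝ᵥ M *ᵥ z + z ⬝ᵥ M *ᵥ x) * a + (z ⬝ᵥ M *ᵥ z) * a ^ 2 := by
  simp only [mulVec_add, mulVec_smul, dotProduct_add, add_dotProduct, dotProduct_smul,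
    smul_dotProduct, smul_eq_mul]
  ring

end CommRing

section Field

variable {n K : Type*} [Fintype n] [DecidableEq n] [Field K] {B : Matrix n n K}

theorem inv_add_vecMulVec (hB : IsUnit B.det) {u v : n → K} (h : 1 + v ⬝ᵥ B⁻¹ *ᵥ u ≠ 0) :
    (B + vecMulVec u v)⁻¹ =
      B⁻¹ - (1 + v ⬝ᵥ B⁻¹ *ᵥ u)⁻¹ • vecMulVec (B⁻¹ *ᵥ u) (v ᵥ* B⁻¹) := by
  refine inv_eq_right_inv ?_
  have hBB : B * B⁻¹ = 1 := mul_nonsing_inv B hB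
  rw [Matrix.add_mul, Matrix.mul_sub, Matrix.mul_sub, Matrix.mul_smul, Matrix.mul_smul, hBB,
    mul_vecMulVec, mulVec_mulVec, hBB, one_mulVec, vecMulVec_mul, vecMulVec_mul_vecMulVec,
    vecMulVec_smul, smul_smul]
  have hk : (1 + v ⬝ᵥ B⁻¹ *ᵥ u)⁻¹ * (1 + v ⬝ᵥ B⁻¹ *ᵥ u) = 1 := inv_mul_cancel₀ h
  linear_combination (norm := module) (-hk) • vecMulVec u (v ᵥ* B⁻¹)

theorem dotProduct_inv_add_vecMulVec_mulVec (hB : IsUnit B.det) {u v : n → K}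
    (h : 1 + v ⬝ᵥ B⁻¹ *ᵥ u ≠ 0) (x y : n → K) :
    x ⬝ᵥ (B + vecMulVec u v)⁻¹ *ᵥ y =
      x ⬝ᵥ B⁻¹ *ᵥ y - (x ⬝ᵥ B⁻¹ *ᵥ u) * (v ⬝ᵥ B⁻¹ *ᵥ y) / (1 + v ⬝ᵥ B⁻¹ *ᵥ u) := by
  rw [inv_add_vecMulVec hB h, sub_mulVec, smul_mulVec, vecMulVec_mulVec, op_smul_eq_smul,
    dotProduct_sub, dotProduct_smul, dotProduct_smul, ← dotProduct_mulVec, smul_eq_mul,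
    smul_eq_mul]
  ring

theorem det_add_vecMulVec (hB : IsUnit B.det) (u v : n → K) :
    (B + vecMulVec u v).det = B.det * (1 + v ⬝ᵥ B⁻¹ *ᵥ u) := by
  rw [vecMulVec_eq Unit, det_add_replicateCol_mul_replicateRow hB]
  congr 1
  rw [det_unique, Matrix.mul_assoc, ← replicateCol_mulVec, Matrix.add_apply, Matrix.one_apply_eq,
    replicateRow_mul_replicateCol_apply]

end Field

namespace PosDef

variable {n : Type*} [Fintype n] [DecidableEq n] {B : Matrix n n ℝ} {ρ : ℝ}

theorem dotProduct_inv_mulVec_nonneg (hB : B.PosDef) (z : n → ℝ) : 0 ≤ z ⬝ᵥ B⁻¹ *ᵥ z := by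
  simpa using hB.inv.posSemidef.dotProduct_mulVec_nonneg z

theorem dotProduct_inv_add_smul_vecMulVec_mulVec (hB : B.PosDef) (hρ : 0 ≤ ρ) (x z : n → ℝ) :
    x ⬝ᵥ (B + ρ • vecMulVec z z)⁻¹ *ᵥ x =
      x ⬝ᵥ B⁻¹ *ᵥ x - ρ * (z ⬝ᵥ B⁻¹ *ᵥ x) ^ 2 / (1 + ρ * (z ⬝ᵥ B⁻¹ *ᵥ z)) := by
  have hpos : 1 + z ⬝ᵥ B⁻¹ *ᵥ (ρ • z) ≠ 0 := by
    rw [mulVec_smul, dotProduct_smul, smul_eq_mul]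
    have := hB.dotProduct_inv_mulVec_nonneg z
    positivity
  rw [← smul_vecMulVec, dotProduct_inv_add_vecMulVec_mulVec hB.det_pos.ne'.isUnit hpos]
  simp only [mulVec_smul, dotProduct_smul, smul_eq_mul,
    hB.inv.isHermitian.dotProduct_mulVec_comm x z]
  ring

theorem dotProduct_inv_add_smul_vecMulVec_mulVec_le (hB : B.PosDef) (hρ : 0 ≤ ρ)
    (x z : n → ℝ) :
    x ⬝ᵥ (B + ρ • vecMulVec z z)⁻¹ *ᵥ x ≤ x ⬝ᵥ B⁻¹ *ᵥ x := by
  rw [hB.dotProduct_inv_add_smul_vecMulVec_mulVec hρ, sub_le_self_iff]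
  have := hB.dotProduct_inv_mulVec_nonneg z
  positivity

theorem mul_dotProduct_inv_add_smul_vecMulVec_mulVec_le_log (hB : B.PosDef) (hρ : 0 ≤ ρ)
    (z : n → ℝ) :
    ρ * (z ⬝ᵥ (B + ρ • vecMulVec z z)⁻¹ *ᵥ z) ≤
      Real.log ((B + ρ • vecMulVec z z).det / B.det) := by
  rw [hB.dotProduct_inv_add_smul_vecMulVec_mulVec hρ, ← smul_vecMulVec,
    det_add_vecMulVec hB.det_pos.ne'.isUnit, mul_div_cancel_left₀ _ hB.det_pos.ne',
    mulVec_smul, dotProduct_smul, smul_eq_mul]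
  have ht : 0 ≤ ρ * (z ⬝ᵥ B⁻¹ *ᵥ z) := mul_nonneg hρ (hB.dotProduct_inv_mulVec_nonneg z)
  convert Real.one_sub_inv_le_log_of_pos (by positivity : 0 < 1 + ρ * (z ⬝ᵥ B⁻¹ *ᵥ z)) using 1
  field_simp
  ring

end PosDef

end Matrix

theorem integral_quadratic_le_of_integral_id_eq_zero {p : Measure ℝ} [IsProbabilityMeasure p]
    {L : ℝ} (hsupp : p (Set.Icc (-L) L)ᶜ = 0) (hmean : ∫ α, α ∂p = 0) (a b q : ℝ)
    (hq : 0 ≤ q) :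
    ∫ α, a + b * α + q * α ^ 2 ∂p ≤ a + q * L ^ 2 := by
  have hIcc : ∀ᵐ α ∂p, α ∈ Set.Icc (-L) L := ae_iff.2 hsupp
  have hsq : ∀ᵐ α ∂p, α ^ 2 ≤ L ^ 2 := hIcc.mono fun α h => sq_le_sq' h.1 h.2
  have hint : Integrable (fun α : ℝ => α) p :=
    .of_bound measurable_id.aestronglyMeasurable L (hIcc.mono fun α h => abs_le.2 h)
  have hint_sq : Integrable (fun α : ℝ => α ^ 2) p :=
    .of_bound (measurable_id.pow_const 2).aestronglyMeasurable (L ^ 2)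
      (hsq.mono fun α h => by rwa [Real.norm_eq_abs, abs_sq])
  have hmoment : ∫ α, α ^ 2 ∂p ≤ L ^ 2 := by
    simpa using integral_mono_ae hint_sq (integrable_const (L ^ 2)) hsq
  calc ∫ α, a + b * α + q * α ^ 2 ∂p = a + b * ∫ α, α ∂p + q * ∫ α, α ^ 2 ∂p := by
        rw [integral_add (f := fun α => a + b * α) ((integrable_const a).add (hint.const_mul b))
            (hint_sq.const_mul q),
          integral_add (integrable_const a) (hint.const_mul b), integral_const,
          integral_const_mul, integral_const_mul]
        simp
    _ ≤ a + q * L ^ 2 := by rw [hmean]; nlinarith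

theorem Uvaw_restricted_concavity_general (d : ℕ) (ρ lam L c : ℝ)
    (hρ : 0 < ρ) (hlam : 0 < lam) (hc : L ^ 2 / ρ ≤ c)
    (x z : Fin d → ℝ) (S : Matrix (Fin d) (Fin d) ℝ) (hS : S.PosSemidef)
    (p : Measure ℝ) [IsProbabilityMeasure p]
    (hsupp : p (Set.Icc (-L) L)ᶜ = 0) (hmean : ∫ α, α ∂p = 0) :
    ∫ α, Uvaw d ρ lam c (x + α • z) (S + Matrix.vecMulVec z z) ∂p ≤
      Uvaw d ρ lam c x S := by
  set I : Matrix (Fin d) (Fin d) ℝ := 1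
  set B := ρ • S + lam • I
  set A := B + ρ • vecMulVec z z
  have hB : B.PosDef := PosDef.posSemidef_add (hS.smul hρ.le) (PosDef.one.smul hlam)
  have hA : A.PosDef := hB.add_posSemidef ((posSemidef_vecMulVec_self_star z).smul hρ.le)
  have hA_eq : ρ • (S + vecMulVec z z) + lam • I = A := by simp only [A, B, smul_add]; abel
  have hlog : Real.log (A.det / (lam • I).det) =
      Real.log (B.det / (lam • I).det) + Real.log (A.det / B.det) := by
    have hlam_det : 0 < (lam • I).det := (PosDef.one.smul hlam).det_pos
    rw [← Real.log_mul (div_pos hB.det_pos hlam_det).ne' (div_pos hA.det_pos hB.det_pos).ne',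
      div_mul_div_comm, mul_comm B.det, mul_div_mul_right _ _ hB.det_pos.ne']
  have hq := hA.dotProduct_inv_mulVec_nonneg z
  calc ∫ α, Uvaw d ρ lam c (x + α • z) (S + vecMulVec z z) ∂p
      = ∫ α, ((1 / 2) * (x ⬝ᵥ A⁻¹ *ᵥ x) - c * Real.log (A.det / (lam • I).det)) +
          (1 / 2) * (x ⬝ᵥ A⁻¹ *ᵥ z + z ⬝ᵥ A⁻¹ *ᵥ x) * α +
          (1 / 2) * (z ⬝ᵥ A⁻¹ *ᵥ z) * α ^ 2 ∂p := by
        congr with α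
        rw [Uvaw, hA_eq, dotProduct_add_smul_mulVec_add_smul]
        ring
    _ ≤ ((1 / 2) * (x ⬝ᵥ A⁻¹ *ᵥ x) - c * Real.log (A.det / (lam • I).det)) +
          (1 / 2) * (z ⬝ᵥ A⁻¹ *ᵥ z) * L ^ 2 :=
        integral_quadratic_le_of_integral_id_eq_zero hsupp hmean _ _ _ (by positivity)
    _ ≤ (1 / 2) * (x ⬝ᵥ B⁻¹ *ᵥ x) - c * Real.log (B.det / (lam • I).det) := by
        have hquad := hB.dotProduct_inv_add_smul_vecMulVec_mulVec_le hρ.le x z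
        have hdet := hB.mul_dotProduct_inv_add_smul_vecMulVec_mulVec_le_log hρ.le z
        have hc0 : 0 ≤ c := (div_nonneg (sq_nonneg L) hρ.le).trans hc
        have hlin : L ^ 2 * (z ⬝ᵥ A⁻¹ *ᵥ z) ≤ c * Real.log (A.det / B.det) := calc
          L ^ 2 * (z ⬝ᵥ A⁻¹ *ᵥ z) ≤ c * ρ * (z ⬝ᵥ A⁻¹ *ᵥ z) := by
            gcongr
            exact (div_le_iff₀ hρ).1 hc
          _ = c * (ρ * (z ⬝ᵥ A⁻¹ *ᵥ z)) := mul_assoc _ _ _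
          _ ≤ c * Real.log (A.det / B.det) := by gcongr
        rw [hlog]
        linarith [mul_nonneg (sq_nonneg L) hq]
    _ = Uvaw d ρ lam c x S := rfl

/-- Restricted concavity (property 3°) of the Vovk–Azoury–Warmuth Burkholder function
(Theorem 6.6): for any mean-zero distribution `p` on `[−L, L]`,
`E_{α∼p}[U(x + αz, S + zzᵀ)] ≤ U(x, S)` whenever `c ≥ L²/ρ`. -/
theorem Uvaw_restricted_concavity (d : ℕ) (ρ lam L c : ℝ)
    (hρ : 0 < ρ) (hlam : 0 < lam) (hL : 0 < L) (hc : L ^ 2 / ρ ≤ c)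
    (x z : Fin d → ℝ) (S : Matrix (Fin d) (Fin d) ℝ) (hS : S.PosSemidef)
    (p : Measure ℝ) [IsProbabilityMeasure p]
    (hsupp : p (Set.Icc (-L) L)ᶜ = 0) (hmean : ∫ α, α ∂p = 0) :
    ∫ α, Uvaw d ρ lam c (x + α • z) (S + Matrix.vecMulVec z z) ∂p ≤
      Uvaw d ρ lam c x S :=
  Uvaw_restricted_concavity_general d ρ lam L c hρ hlam hc x z S hS p hsupp hmean
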